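/- Let Σ₁, …, Σ_{n−1} ∈ R be the unique elements satisfying n·f(x)·g(x) = ((x+1)^n + Σ_{i=1}^{n−1} (−1)^i Σ_i (x+1)^{n−i}) − (x^n + Σ_{i=1}^{n−1} (−1)^i Σ_i x^{n−i}) in R[x], and set Σ_n = S. Then Σ₁, …, Σ_n are algebraically independent over ℂ; equivalently, the ℂ-algebra homomorphism from the polynomial ring ℂ[y₁, …, y_n] to R sending y_i to Σ_i is injective. -/

import Mathlib

set_option synthInstance.maxHeartbeats 1000000
set_option maxHeartbeats 1000000

noncomputable section

open Polynomial

/-- The polynomial ring `R = ℂ[f₁, …, f_l, g₁, …, g_{n−l−1}, S]` in `n` indeterminates. -/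
abbrev Rring (n l : ℕ) := MvPolynomial (Fin l ⊕ Fin (n - l - 1) ⊕ Unit) ℂ

/-- `f(x) = x^l + Σ_{i=1}^l f_i x^{l−i} ∈ R[x]`. -/
def fpol (n l : ℕ) : Polynomial (Rring n l) :=
  X ^ l + ∑ i : Fin l, C (MvPolynomial.X (Sum.inl i)) * X ^ (l - 1 - (i : ℕ))

/-- `g(x) = x^{n−l−1} + Σ_{i=1}^{n−l−1} g_i x^{n−l−1−i} ∈ R[x]`. -/
def gpol (n l : ℕ) : Polynomial (Rring n l) :=
  X ^ (n - l - 1) + ∑ i : Fin (n - l - 1), C (MvPolynomial.X (Sum.inr (Sum.inl i))) * X ^ (n - l - 2 - (i : ℕ))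

/-- The last indeterminate `S` of `R`. -/
def Svar (n l : ℕ) : Rring n l := MvPolynomial.X (Sum.inr (Sum.inr ()))

/-- The defining identity for `Σ₁, …, Σ_{n−1} ∈ R`:
`n·f(x)·g(x) = ((x+1)^n + Σ_{i=1}^{n−1} (−1)^i Σ_i (x+1)^{n−i}) − (x^n + Σ_{i=1}^{n−1} (−1)^i Σ_i x^{n−i})`. -/
def sigmaEq (n l : ℕ) (Sig : Fin (n - 1) → Rring n l) : Prop :=
  (n : Polynomial (Rring n l)) * fpol n l * gpol n l =
    ((X + 1) ^ n + ∑ i : Fin (n - 1), C ((-1 : Rring n l) ^ ((i : ℕ) + 1) * Sig i) * (X + 1) ^ (n - ((i : ℕ) + 1)))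
    - (X ^ n + ∑ i : Fin (n - 1), C ((-1 : Rring n l) ^ ((i : ℕ) + 1) * Sig i) * X ^ (n - ((i : ℕ) + 1)))

/-!
`f` and `g` are monic factors of the monic polynomial `f g`, and the defining identity shows
(dividing by `n`, which is a unit in `ℂ`) that the coefficients of `f g` are polynomials in
`Σ₁, …, Σ_{n−1}`. Hence every indeterminate of `R` is integral over `ℂ[Σ₁, …, Σ_n]`, so `R`
is algebraic over this subalgebra generated by `n` elements. As `R` has transcendence degree `n`,
these `n` generators form a transcendence basis.
-/

section
variable {R : Type*} [CommRing R]

theorem monic_X_pow_add_sum_C_mul_X_pow (m : ℕ) (a : Fin m → R) :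
    (X ^ m + ∑ i : Fin m, C (a i) * X ^ (m - 1 - (i : ℕ))).Monic := by
  refine monic_X_pow_add <| (degree_sum_le _ _).trans_lt <|
    (Finset.sup_lt_iff (WithBot.bot_lt_coe m)).2 fun i _ => ?_
  refine (degree_C_mul_X_pow_le _ _).trans_lt ?_
  rw [Nat.cast_withBot]
  exact WithBot.coe_lt_coe.2 (by omega)

theorem coeff_X_pow_add_sum_C_mul_X_pow (m : ℕ) (a : Fin m → R) (i : Fin m) :
    (X ^ m + ∑ j : Fin m, C (a j) * X ^ (m - 1 - (j : ℕ))).coeff (m - 1 - i) = a i := by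
  have hinj : ∀ j : Fin m, m - 1 - (i : ℕ) = m - 1 - j ↔ j = i := fun j => by omega
  simp [coeff_X_pow, hinj, show m - 1 - (i : ℕ) ≠ m by omega]

end

theorem isIntegral_coeff_of_dvd_of_mem_lifts {T R : Type*} [CommRing T] [CommRing R]
    [Algebra T R] {p q : R[X]} (hp : p.Monic) (hlifts : p ∈ lifts (algebraMap T R))
    (hq : q.Monic) (hqp : q ∣ p) (i : ℕ) : IsIntegral T (q.coeff i) := by
  obtain ⟨p', rfl, -, hp'⟩ := lifts_and_natDegree_eq_and_monic hlifts hp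
  exact isIntegral_coeff_of_dvd p' q hp' hq hqp i

theorem MvPolynomial.isIntegral_of_forall_isIntegral_X {σ k : Type*} [CommRing k]
    (T : Subalgebra k (MvPolynomial σ k)) (hX : ∀ v, IsIntegral T (X v : MvPolynomial σ k)) :
    Algebra.IsIntegral T (MvPolynomial σ k) := by
  refine ⟨fun p => MvPolynomial.induction_on p (fun a => ?_) (fun _ _ => .add)
    fun _ v hp => hp.mul (hX v)⟩
  exact isIntegral_algebraMap (x := algebraMap k T a)

theorem fpol_monic (n l : ℕ) : (fpol n l).Monic :=
  monic_X_pow_add_sum_C_mul_X_pow _ _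

-- `n - l - 2` in `gpol` unfolds to `n - l - 1 - 1`.
theorem gpol_monic (n l : ℕ) : (gpol n l).Monic :=
  monic_X_pow_add_sum_C_mul_X_pow _ _

theorem coeff_fpol (n l : ℕ) (i : Fin l) :
    (fpol n l).coeff (l - 1 - i) = MvPolynomial.X (Sum.inl i) :=
  coeff_X_pow_add_sum_C_mul_X_pow _ _ i

theorem coeff_gpol (n l : ℕ) (j : Fin (n - l - 1)) :
    (gpol n l).coeff (n - l - 1 - 1 - j) = MvPolynomial.X (Sum.inr (Sum.inl j)) :=
  coeff_X_pow_add_sum_C_mul_X_pow _ _ j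

theorem fpol_mul_gpol_mem_lifts {n l : ℕ} (hn : n ≠ 0) {Sig : Fin (n - 1) → Rring n l}
    (h : sigmaEq n l Sig) (T : Subalgebra ℂ (Rring n l)) (hT : ∀ i, Sig i ∈ T) :
    fpol n l * gpol n l ∈ lifts (algebraMap T (Rring n l)) := by
  rw [lifts_iff_liftsRing]
  set L := liftsRing (algebraMap T (Rring n l))
  have hC : ∀ r ∈ T, C r ∈ L := fun r hr =>
    (lifts_iff_liftsRing _ _).1 (C_mem_lifts _ (⟨r, hr⟩ : T))
  have hX : X ∈ L := (lifts_iff_liftsRing _ _).1 (X_mem_lifts _)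
  have hX1 : X + 1 ∈ L := add_mem hX (one_mem _)
  have hterm : ∀ (i : Fin (n - 1)) (p : (Rring n l)[X]), p ∈ L →
      C ((-1) ^ ((i : ℕ) + 1) * Sig i) * p ^ (n - ((i : ℕ) + 1)) ∈ L := fun i _ hp =>
    mul_mem (hC _ (mul_mem (pow_mem (neg_mem (one_mem _)) _) (hT i))) (pow_mem hp _)
  have hrhs : (n : (Rring n l)[X]) * fpol n l * gpol n l ∈ L := by
    rw [h]
    exact sub_mem (add_mem (pow_mem hX1 _) (sum_mem fun i _ => hterm i _ hX1))
      (add_mem (pow_mem hX _) (sum_mem fun i _ => hterm i _ hX))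
  have hdiv : C (algebraMap ℂ (Rring n l) (n : ℂ)⁻¹) * (n * fpol n l * gpol n l) =
      fpol n l * gpol n l := by
    rw [← mul_assoc, ← mul_assoc, ← C_eq_natCast, ← map_natCast (algebraMap ℂ (Rring n l)),
      ← C_mul, ← map_mul, inv_mul_cancel₀ (Nat.cast_ne_zero.2 hn), map_one, C_1, one_mul]
  rw [← hdiv]
  exact mul_mem (hC _ (Subalgebra.algebraMap_mem _ _)) hrhs

theorem isIntegral_of_fpol_mul_gpol_mem_lifts {n l : ℕ} (T : Subalgebra ℂ (Rring n l))
    (hfg : fpol n l * gpol n l ∈ lifts (algebraMap T (Rring n l))) (hS : Svar n l ∈ T) :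
    Algebra.IsIntegral T (Rring n l) := by
  have hmonic := (fpol_monic n l).mul (gpol_monic n l)
  refine MvPolynomial.isIntegral_of_forall_isIntegral_X T ?_
  rintro (i | j | ⟨⟩)
  · rw [← coeff_fpol n l i]
    exact isIntegral_coeff_of_dvd_of_mem_lifts hmonic hfg (fpol_monic n l) (dvd_mul_right _ _) _
  · rw [← coeff_gpol n l j]
    exact isIntegral_coeff_of_dvd_of_mem_lifts hmonic hfg (gpol_monic n l) (dvd_mul_left _ _) _
  · exact isIntegral_algebraMap (x := (⟨Svar n l, hS⟩ : T))

theorem stmt13_general (n l : ℕ) (hn : 2 ≤ n)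
    (Sig : Fin (n - 1) → Rring n l) (h : sigmaEq n l Sig) :
    Function.Injective
      (MvPolynomial.aeval (R := ℂ)
        (fun i : Fin n => if h' : (i : ℕ) < n - 1 then Sig ⟨(i : ℕ), h'⟩ else Svar n l) :
        MvPolynomial (Fin n) ℂ →ₐ[ℂ] Rring n l) := by
  set y := fun i : Fin n => if h' : (i : ℕ) < n - 1 then Sig ⟨(i : ℕ), h'⟩ else Svar n l
  set T := Algebra.adjoin ℂ (Set.range y)
  have hSig : ∀ i, Sig i ∈ T := fun i => Algebra.subset_adjoin ⟨⟨i, by omega⟩, by simp [y]⟩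
  have hS : Svar n l ∈ T := Algebra.subset_adjoin ⟨⟨n - 1, by omega⟩, by simp [y]⟩
  have : Algebra.IsIntegral T (Rring n l) :=
    isIntegral_of_fpol_mul_gpol_mem_lifts T (fpol_mul_gpol_mem_lifts (by omega) h T hSig) hS
  have htrdeg : Cardinal.mk (Fin n) ≤ Algebra.trdeg ℂ (Rring n l) := by
    simp only [MvPolynomial.trdeg_of_isDomain, Cardinal.mk_fintype, Fintype.card_sum,
      Fintype.card_fin, Fintype.card_unit, Cardinal.lift_natCast]
    exact_mod_cast (by omega : n ≤ l + (n - l - 1 + 1))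
  have hbasis : IsTranscendenceBasis ℂ y :=
    Algebra.IsAlgebraic.isTranscendenceBasis_of_le_trdeg_of_finite ℂ y htrdeg
  exact algebraicIndependent_iff_injective_aeval.mp hbasis.1

/-- if `Σ₁, …, Σ_{n−1} ∈ R` satisfy the defining identity and `Σ_n = S`, then
`Σ₁, …, Σ_n` are algebraically independent over ℂ: the ℂ-algebra homomorphism
`ℂ[y₁, …, y_n] → R`, `y_i ↦ Σ_i`, is injective. -/
theorem stmt13 (n l : ℕ) (hn : 2 ≤ n) (hl : l ≤ n - 1)
    (Sig : Fin (n - 1) → Rring n l) (h : sigmaEq n l Sig) :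
    Function.Injective
      (MvPolynomial.aeval (R := ℂ)
        (fun i : Fin n => if h' : (i : ℕ) < n - 1 then Sig ⟨(i : ℕ), h'⟩ else Svar n l) :
        MvPolynomial (Fin n) ℂ →ₐ[ℂ] Rring n l) :=
  stmt13_general n l hn Sig h

end
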